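/- arXiv:math/0110111 — 3 statements merged into one kernel-verified Lean document; each statement's English description precedes it below -/
import Mathlib

section
/- Fix real numbers f_i, f_{i+1}, d_i, d_{i+1} and h > 0. Set S = (f_{i+1} − f_i)/h, P = (S − d_i)h, Q = (d_{i+1} − S)h, and for k ∈ ℝ let D(k) = Q + (P − Q)k. For a weight α ∈ [0,1] the hybrid-cubic-rational interpolant is F_α(k) = f_i + d_i h k + (α P²/D(k) + (1 − α)(2P − D(k))) k², defined wherever D(k) ≠ 0. If P > 0 and Q > 0, then the pure rational interpolant F_1 satisfies F_1''(k) = 2P²Q²/D(k)³ > 0 for all k ∈ [0,1]; in particular F_1 is strictly convex on [0,1], so the rational interpolation function preserves the convexity of concave data. -/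
/-!
Writing `D(k) = Q + (P - Q) k`, the interpolant `F₁` is an affine function plus `P² k² / D(k)`,
and the second derivative of `k² / (q + r k)` is `2 q² / (q + r k)³`. For `P, Q > 0` the
denominator `D(k) = (1 - k) Q + k P` is positive on `[0, 1]`, so `F₁'' > 0` there.
-/

open Set

section SqDivLinear

variable {q r x : ℝ}

theorem hasDerivAt_sq_div_linear (hx : q + r * x ≠ 0) :
    HasDerivAt (fun k => k ^ 2 / (q + r * k)) ((2 * q * x + r * x ^ 2) / (q + r * x) ^ 2) x := by
  have hden : HasDerivAt (fun k => q + r * k) r x := by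
    simpa using ((hasDerivAt_id x).const_mul r).const_add q
  refine ((hasDerivAt_pow 2 x).fun_div hden hx).congr_deriv ?_
  ring

theorem hasDerivAt_sq_div_linear_deriv (hx : q + r * x ≠ 0) :
    HasDerivAt (fun k => (2 * q * k + r * k ^ 2) / (q + r * k) ^ 2)
      (2 * q ^ 2 / (q + r * x) ^ 3) x := by
  have hden : HasDerivAt (fun k => q + r * k) r x := by
    simpa using ((hasDerivAt_id x).const_mul r).const_add q
  have hnum : HasDerivAt (fun k => 2 * q * k + r * k ^ 2) (2 * q + r * (2 * x)) x := by
    simpa using ((hasDerivAt_id x).const_mul (2 * q)).fun_add ((hasDerivAt_pow 2 x).const_mul r)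
  refine (hnum.fun_div (hden.fun_pow 2) (pow_ne_zero 2 hx)).congr_deriv ?_
  field_simp
  ring

variable (a b c : ℝ)

theorem hasDerivAt_affine_add_sq_div_linear (hx : q + r * x ≠ 0) :
    HasDerivAt (fun k => a + b * k + c * (k ^ 2 / (q + r * k)))
      (b + c * ((2 * q * x + r * x ^ 2) / (q + r * x) ^ 2)) x := by
  simpa using (((hasDerivAt_id x).const_mul b).const_add a).fun_add
    ((hasDerivAt_sq_div_linear hx).const_mul c)

theorem deriv_deriv_affine_add_sq_div_linear (hx : q + r * x ≠ 0) :
    deriv (deriv fun k => a + b * k + c * (k ^ 2 / (q + r * k))) x =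
      2 * c * q ^ 2 / (q + r * x) ^ 3 := by
  have hderiv : deriv (fun k => a + b * k + c * (k ^ 2 / (q + r * k))) =ᶠ[nhds x]
      fun k => b + c * ((2 * q * k + r * k ^ 2) / (q + r * k) ^ 2) := by
    have hcont : Continuous fun k => q + r * k := by fun_prop
    filter_upwards [hcont.continuousAt.eventually_ne hx] with y hy
    exact (hasDerivAt_affine_add_sq_div_linear a b c hy).deriv
  rw [hderiv.deriv_eq, (((hasDerivAt_sq_div_linear_deriv hx).const_mul c).const_add b).deriv]
  ring

theorem strictConvexOn_affine_add_sq_div_linear {s : Set ℝ} (hs : Convex ℝ s) {c : ℝ}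
    (hc : 0 < c) (hq : q ≠ 0) (hpos : ∀ x ∈ s, 0 < q + r * x) :
    StrictConvexOn ℝ s fun k => a + b * k + c * (k ^ 2 / (q + r * k)) := by
  refine strictConvexOn_of_deriv2_pos' hs (fun x hx => ?_) fun x hx => ?_
  · exact (hasDerivAt_affine_add_sq_div_linear a b c (hpos x hx).ne').continuousAt
      |>.continuousWithinAt
  · have hx := hpos x hx
    rw [Function.iterate_succ_apply, Function.iterate_one,
      deriv_deriv_affine_add_sq_div_linear a b c hx.ne']
    positivity

end SqDivLinear

theorem add_sub_mul_pos_of_mem_Icc {P Q x : ℝ} (hP : 0 < P) (hQ : 0 < Q) (hx : x ∈ Icc 0 1) :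
    0 < Q + (P - Q) * x := by
  obtain ⟨hx0, hx1⟩ := hx
  nlinarith [mul_nonneg hP.le hx0, mul_nonneg hQ.le (sub_nonneg.2 hx1), mul_pos hP hQ]

theorem rational_interpolant_convexity_preserving_general
    (fi di h : ℝ)
    (P Q : ℝ)
    (D : ℝ → ℝ) (hD : ∀ k, D k = Q + (P - Q) * k)
    (F : ℝ → ℝ → ℝ)
    (hF : ∀ α k, F α k =
      fi + di * h * k + (α * P ^ 2 / D k + (1 - α) * (2 * P - D k)) * k ^ 2)
    (hPpos : 0 < P) (hQpos : 0 < Q) :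
    (∀ k ∈ Set.Icc (0 : ℝ) 1,
      deriv (deriv (F 1)) k = 2 * P ^ 2 * Q ^ 2 / D k ^ 3 ∧
        0 < 2 * P ^ 2 * Q ^ 2 / D k ^ 3) ∧
    StrictConvexOn ℝ (Set.Icc (0 : ℝ) 1) (F 1) := by
  have hF1 : F 1 = fun k => fi + di * h * k + P ^ 2 * (k ^ 2 / (Q + (P - Q) * k)) := by
    funext k
    rw [hF, hD]
    ring
  have hDpos : ∀ k ∈ Icc (0 : ℝ) 1, 0 < Q + (P - Q) * k := fun k hk =>
    add_sub_mul_pos_of_mem_Icc hPpos hQpos hk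
  refine ⟨fun k hk => ⟨?_, ?_⟩, ?_⟩
  · rw [hF1, hD, deriv_deriv_affine_add_sq_div_linear _ _ _ (hDpos k hk).ne']
  · have := hDpos k hk
    rw [hD]
    positivity
  · rw [hF1]
    exact strictConvexOn_affine_add_sq_div_linear _ _ (convex_Icc 0 1) (by positivity)
      hQpos.ne' hDpos

/-- For concave data (`P > 0`, `Q > 0`) the pure rational interpolant `F₁`
    has second derivative `2P²Q²/D(k)³ > 0` on `[0,1]`; in particular it is
    strictly convex on `[0,1]`, so the rational interpolation function
    preserves the convexity of concave data. -/
theorem rational_interpolant_convexity_preserving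
    (fi fi1 di di1 h : ℝ) (hh : 0 < h)
    (S P Q : ℝ)
    (hS : S = (fi1 - fi) / h) (hP : P = (S - di) * h) (hQ : Q = (di1 - S) * h)
    (D : ℝ → ℝ) (hD : ∀ k, D k = Q + (P - Q) * k)
    (F : ℝ → ℝ → ℝ)
    (hF : ∀ α k, F α k =
      fi + di * h * k + (α * P ^ 2 / D k + (1 - α) * (2 * P - D k)) * k ^ 2)
    (hPpos : 0 < P) (hQpos : 0 < Q) :
    (∀ k ∈ Set.Icc (0 : ℝ) 1,
      deriv (deriv (F 1)) k = 2 * P ^ 2 * Q ^ 2 / D k ^ 3 ∧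
        0 < 2 * P ^ 2 * Q ^ 2 / D k ^ 3) ∧
    StrictConvexOn ℝ (Set.Icc (0 : ℝ) 1) (F 1) :=
  rational_interpolant_convexity_preserving_general fi di h P Q D hD F hF hPpos hQpos
end

section
/- Fix real numbers f_i, f_{i+1}, d_i, d_{i+1} and h > 0. Set S = (f_{i+1} − f_i)/h, P = (S − d_i)h, Q = (d_{i+1} − S)h, and for k ∈ ℝ let D(k) = Q + (P − Q)k. For a weight α ∈ [0,1] the hybrid-cubic-rational interpolant is F_α(k) = f_i + d_i h k + (α P²/D(k) + (1 − α)(2P − D(k))) k², defined wherever D(k) ≠ 0. Suppose P > 0 and Q > 0, and set M = max(2, max(Q/P, P/Q)) and α* = M(M−2)/(M(M−2)+1). Then for all k ∈ [0,1], 2α*P²Q²/D(k)³ + 2(1 − α*)·((2P − Q) − 3(P − Q)k) ≥ 0; i.e., the second derivative of F_{α*} is nonnegative throughout [0,1], so the hybrid interpolant with the theoretically determined mixing ratio α* preserves the convexity of concave data. -/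
/-!
Write `a = min P Q`, `b = max P Q` and `t = M(M-2)`, so that `α* = t/(t+1)`.
On `[0,1]` the denominator `D(k)` is a convex combination of `Q` and `P`, hence lies in
`[a, b]`, so the rational term is at least `a²b²/b³ = a²/b`; the linear term is an affine
function of `k` with endpoint values `2P - Q` and `2Q - P`, both at least `2a - b`.
It remains to show `t a²/b + 2a - b ≥ 0`, i.e. `r(r-2) ≤ M(M-2)` for `r = b/a`,
which holds because `1 ≤ r ≤ M` and `x ↦ x(x-2)` increases on `[1, ∞)`.
-/

open Set

lemma Convex.add_sub_mul_mem {s : Set ℝ} (hs : Convex ℝ s) {x y k : ℝ} (hx : x ∈ s) (hy : y ∈ s)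
    (hk : k ∈ Icc (0 : ℝ) 1) : x + (y - x) * k ∈ s := by
  simpa only [smul_eq_mul, mul_comm] using hs.add_smul_sub_mem hx hy hk

lemma max_le_max_div_mul_min {P Q : ℝ} (hP : 0 < P) (hQ : 0 < Q) :
    max P Q ≤ max (Q / P) (P / Q) * min P Q := by
  rcases le_total P Q with h | h
  · rw [max_eq_right h, min_eq_left h, ← div_le_iff₀ hP]
    exact le_max_left _ _
  · rw [max_eq_left h, min_eq_right h, ← div_le_iff₀ hQ]
    exact le_max_right _ _

lemma mul_sub_two_mul_le {a b M : ℝ} (hab : a ≤ b) (hbM : b ≤ M * a) :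
    b * (b - 2 * a) ≤ M * (M - 2) * a ^ 2 := by
  -- `M(M-2)a² - b(b-2a) = (Ma - b)(Ma + b - 2a)`
  nlinarith [mul_nonneg (sub_nonneg.2 hbM) (by linarith : 0 ≤ M * a + b - 2 * a)]

lemma mul_sq_div_add_two_mul_sub_nonneg {a b M : ℝ} (ha : 0 < a) (hab : a ≤ b)
    (hbM : b ≤ M * a) : 0 ≤ M * (M - 2) * (a ^ 2 / b) + (2 * a - b) := by
  have hb : 0 < b := ha.trans_le hab
  have hsplit : M * (M - 2) * (a ^ 2 / b) + (2 * a - b)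
      = (M * (M - 2) * a ^ 2 - b * (b - 2 * a)) / b := by
    field_simp
    ring
  rw [hsplit]
  exact div_nonneg (sub_nonneg.2 (mul_sub_two_mul_le hab hbM)) hb.le

lemma sq_div_le_sq_mul_div_pow_three {a b d : ℝ} (hd : 0 < d) (hdb : d ≤ b) :
    a ^ 2 / b ≤ (a * b) ^ 2 / d ^ 3 := calc
  a ^ 2 / b = (a * b) ^ 2 / b ^ 3 := by
    have hb : 0 < b := hd.trans_le hdb
    field_simp
  _ ≤ (a * b) ^ 2 / d ^ 3 := by gcongr

lemma two_mul_min_sub_max_le (P Q : ℝ) {k : ℝ} (hk : k ∈ Icc (0 : ℝ) 1) :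
    2 * min P Q - max P Q ≤ (2 * P - Q) - 3 * (P - Q) * k := by
  have hmem := (convex_Ici (2 * min P Q - max P Q)).add_sub_mul_mem
    (x := 2 * P - Q) (y := 2 * Q - P)
    (by simp only [mem_Ici]; linarith [min_le_left P Q, le_max_right P Q])
    (by simp only [mem_Ici]; linarith [min_le_right P Q, le_max_left P Q]) hk
  exact le_of_le_of_eq hmem (by ring)

lemma div_add_one_mul_add_nonneg {t x y : ℝ} (ht : 0 ≤ t) (h : 0 ≤ t * x + y) :
    0 ≤ t / (t + 1) * x + (1 - t / (t + 1)) * y := by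
  have hsplit : t / (t + 1) * x + (1 - t / (t + 1)) * y = (t * x + y) / (t + 1) := by
    field_simp
    ring
  rw [hsplit]
  exact div_nonneg h (by linarith)

/-- With the theoretically determined mixing ratio
    `α* = M(M−2)/(M(M−2)+1)`, `M = max(2, max(Q/P, P/Q))`, the second
    derivative of the hybrid-cubic-rational interpolant is nonnegative
    throughout the cell for concave data: the hybrid interpolant preserves
    the convexity. -/
theorem hcr_optimal_alpha_convexity_preserving
    (P Q : ℝ) (hP : 0 < P) (hQ : 0 < Q)
    (M : ℝ) (hM : M = max 2 (max (Q / P) (P / Q)))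
    (αs : ℝ) (hα : αs = M * (M - 2) / (M * (M - 2) + 1))
    (D : ℝ → ℝ) (hD : ∀ k, D k = Q + (P - Q) * k) :
    ∀ k ∈ Set.Icc (0 : ℝ) 1,
      0 ≤ 2 * αs * P ^ 2 * Q ^ 2 / D k ^ 3 +
        2 * (1 - αs) * ((2 * P - Q) - 3 * (P - Q) * k) := by
  intro k hk
  set a := min P Q
  set b := max P Q
  have ha : 0 < a := lt_min hP hQ
  have hab : a ≤ b := min_le_max
  have hM2 : 2 ≤ M := hM ▸ le_max_left _ _
  have hbM : b ≤ M * a := (max_le_max_div_mul_min hP hQ).trans <|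
    mul_le_mul_of_nonneg_right (hM ▸ le_max_right _ _) ha.le
  have ht : 0 ≤ M * (M - 2) := by nlinarith
  obtain ⟨hα0, hα1⟩ : 0 ≤ αs ∧ 0 ≤ 1 - αs := by
    rw [hα, sub_nonneg, div_le_one (by linarith)]
    exact ⟨by positivity, by linarith⟩
  have hDk : D k ∈ Icc a b := hD k ▸ (convex_Icc a b).add_sub_mul_mem
    ⟨min_le_right P Q, le_max_right P Q⟩ ⟨min_le_left P Q, le_max_left P Q⟩ hk
  have hrational : a ^ 2 / b ≤ P ^ 2 * Q ^ 2 / D k ^ 3 := by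
    rw [← mul_pow, ← min_mul_max P Q]
    exact sq_div_le_sq_mul_div_pow_three (ha.trans_le hDk.1) hDk.2
  have hlower := div_add_one_mul_add_nonneg ht (mul_sq_div_add_two_mul_sub_nonneg ha hab hbM)
  rw [← hα] at hlower
  calc 0 ≤ 2 * (αs * (a ^ 2 / b) + (1 - αs) * (2 * a - b)) := by positivity
    _ ≤ 2 * (αs * (P ^ 2 * Q ^ 2 / D k ^ 3) + (1 - αs) * ((2 * P - Q) - 3 * (P - Q) * k)) := by
      gcongr 2 * (αs * ?_ + (1 - αs) * ?_)
      exact two_mul_min_sub_max_le P Q hk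
    _ = _ := by ring
end

section
/- Fix real numbers P > 0 and Q > 0 with max(P/Q, Q/P) > 2, and for k ∈ ℝ let D(k) = Q + (P − Q)k. Set M = max(P/Q, Q/P) and α* = M(M−2)/(M(M−2)+1). Then for every β ∈ [0, α*) there exists k ∈ [0,1] (one may take k = 1 if P > 2Q and k = 0 if Q > 2P) such that 2βP²Q²/D(k)³ + 2(1 − β)·((2P − Q) − 3(P − Q)k) < 0; i.e., α* is the minimum of the mixing ratios for which the hybrid-cubic-rational interpolant satisfies the convexity-preserving condition. -/
/-!
At `k = 1` the second derivative equals `2 (β (P - Q)² - P (P - 2Q)) / P`, and with `M = P / Q`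
one has `M (M - 2) / (M (M - 2) + 1) = P (P - 2Q) / (P - Q)²`; so for `P > 2Q` the condition fails
at `k = 1` exactly when `β < α*`. The case `Q > 2P` is the mirror image under `P ↔ Q`, `k ↦ 1 - k`.
-/

noncomputable def hcrSecondDeriv (P Q β k : ℝ) : ℝ :=
  2 * β * P ^ 2 * Q ^ 2 / (Q + (P - Q) * k) ^ 3 + 2 * (1 - β) * ((2 * P - Q) - 3 * (P - Q) * k)

theorem hcrSecondDeriv_zero_eq_swap (P Q β : ℝ) : hcrSecondDeriv P Q β 0 = hcrSecondDeriv Q P β 1 := by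
  unfold hcrSecondDeriv
  ring_nf

theorem hcrSecondDeriv_one_eq {P : ℝ} (hP : P ≠ 0) (Q β : ℝ) :
    hcrSecondDeriv P Q β 1 = 2 * (β * (P - Q) ^ 2 - P * (P - 2 * Q)) / P := by
  rw [hcrSecondDeriv, show Q + (P - Q) * 1 = P by ring]
  field_simp
  ring

theorem ratio_mul_sub_two_div_eq {P Q : ℝ} (hQ : Q ≠ 0) :
    P / Q * (P / Q - 2) / (P / Q * (P / Q - 2) + 1) = P * (P - 2 * Q) / (P - Q) ^ 2 := by
  have hnum : P / Q * (P / Q - 2) = P * (P - 2 * Q) / Q ^ 2 := by field_simp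
  have hden : P / Q * (P / Q - 2) + 1 = (P - Q) ^ 2 / Q ^ 2 := by field_simp; ring
  rw [hden, hnum, div_div_div_cancel_right₀ (pow_ne_zero 2 hQ)]

theorem hcrSecondDeriv_one_neg {P Q β : ℝ} (hP : 0 < P) (hQ : Q ≠ 0) (hPQ : P ≠ Q)
    (hβ : β < P / Q * (P / Q - 2) / (P / Q * (P / Q - 2) + 1)) :
    hcrSecondDeriv P Q β 1 < 0 := by
  rw [ratio_mul_sub_two_div_eq hQ, lt_div_iff₀ (sq_pos_of_ne_zero (sub_ne_zero.mpr hPQ))] at hβ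
  rw [hcrSecondDeriv_one_eq hP.ne']
  exact div_neg_of_neg_of_pos (by linarith) hP

theorem max_div_div_eq_left {P Q : ℝ} (hP : 0 < P) (hQ : 0 < Q) (h : Q ≤ P) :
    max (P / Q) (Q / P) = P / Q :=
  max_eq_left (((div_le_one hP).mpr h).trans ((one_le_div hQ).mpr h))

/-- Minimality of the optimal mixing ratio: when `max(P/Q, Q/P) > 2`, any
    mixing ratio `β` strictly below `α* = M(M−2)/(M(M−2)+1)` fails the
    convexity-preserving condition at some point of the cell (one may take
    `k = 1` if `P > 2Q` and `k = 0` if `Q > 2P`). -/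
theorem hcr_optimal_alpha_minimal
    (P Q : ℝ) (hP : 0 < P) (hQ : 0 < Q)
    (hbig : 2 < max (P / Q) (Q / P))
    (M : ℝ) (hM : M = max (P / Q) (Q / P))
    (αs : ℝ) (hα : αs = M * (M - 2) / (M * (M - 2) + 1))
    (D : ℝ → ℝ) (hD : ∀ k, D k = Q + (P - Q) * k) :
    ∀ β ∈ Set.Ico (0 : ℝ) αs, ∃ k ∈ Set.Icc (0 : ℝ) 1,
      ((2 * Q < P → k = 1) ∧ (2 * P < Q → k = 0)) ∧
      2 * β * P ^ 2 * Q ^ 2 / D k ^ 3 +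
        2 * (1 - β) * ((2 * P - Q) - 3 * (P - Q) * k) < 0 := by
  rintro β ⟨-, hβα⟩
  have hD' : ∀ k, 2 * β * P ^ 2 * Q ^ 2 / D k ^ 3 +
      2 * (1 - β) * ((2 * P - Q) - 3 * (P - Q) * k) = hcrSecondDeriv P Q β k := fun k => by
    rw [hD, hcrSecondDeriv]
  rcases lt_max_iff.mp hbig with h | h
  · have hPQ : 2 * Q < P := by rw [lt_div_iff₀ hQ] at h; linarith
    rw [hα, hM, max_div_div_eq_left hP hQ (by linarith)] at hβα
    refine ⟨1, ⟨zero_le_one, le_rfl⟩, ⟨fun _ => rfl, fun _ => by linarith⟩, ?_⟩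
    rw [hD']
    exact hcrSecondDeriv_one_neg hP hQ.ne' (by linarith) hβα
  · have hQP : 2 * P < Q := by rw [lt_div_iff₀ hP] at h; linarith
    rw [hα, hM, max_comm, max_div_div_eq_left hQ hP (by linarith)] at hβα
    refine ⟨0, ⟨le_rfl, zero_le_one⟩, ⟨fun _ => by linarith, fun _ => rfl⟩, ?_⟩
    rw [hD', hcrSecondDeriv_zero_eq_swap]
    exact hcrSecondDeriv_one_neg hQ hP.ne' (by linarith) hβα
end
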